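/- arXiv:2008.01428 — 5 statements merged into one kernel-verified Lean document; each statement's English description precedes it below -/
import Mathlib

section
/- Let H be a numerical semigroup minimally generated by three elements which is not symmetric. Then tr(H) = C_H if and only if there exists a positive integer a such that H is generated by {3, 3a+1, 3a+2}. -/
namespace NumSgp

/-- A numerical semigroup: an additive submonoid of ℕ with finite complement. -/
def IsNumSgp (H : Set ℕ) : Prop :=
  0 ∈ H ∧ (∀ a ∈ H, ∀ b ∈ H, a + b ∈ H) ∧ Hᶜ.Finite

/-- Membership of an integer in (the image in ℤ of) `H ⊆ ℕ`. -/
def memZ (H : Set ℕ) (z : ℤ) : Prop := ∃ n ∈ H, (n : ℤ) = z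

/-- The Frobenius number: the largest integer not in `H`. -/
noncomputable def frob (H : Set ℕ) : ℤ := sSup {z : ℤ | ¬ memZ H z}

/-- The pseudo-Frobenius numbers of `H`. -/
def pseudoFrob (H : Set ℕ) : Set ℤ :=
  {f : ℤ | ¬ memZ H f ∧ ∀ m ∈ H, m ≠ 0 → memZ H (f + (m : ℤ))}

/-- The canonical ideal `Ω_H = {-f + h : f ∈ PF(H), h ∈ H}`. -/
def canIdeal (H : Set ℕ) : Set ℤ :=
  {z : ℤ | ∃ f ∈ pseudoFrob H, ∃ h ∈ H, z = -f + (h : ℤ)}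

/-- The anti-canonical ideal `Ω_H⁻¹ = {x : x + Ω_H ⊆ H}`. -/
def antiCanIdeal (H : Set ℕ) : Set ℤ :=
  {x : ℤ | ∀ w ∈ canIdeal H, memZ H (x + w)}

/-- The trace of `H`: the sumset `Ω_H + Ω_H⁻¹`. -/
def trace (H : Set ℕ) : Set ℤ :=
  {z : ℤ | ∃ w ∈ canIdeal H, ∃ x ∈ antiCanIdeal H, z = w + x}

/-- The conductor ideal `C_H = {x : x > Fr(H)}` (viewed inside ℤ). -/
noncomputable def condIdeal (H : Set ℕ) : Set ℤ := {z : ℤ | frob H < z}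

/-- The residue of `H`: `|H ∖ tr(H)|`. -/
noncomputable def res (H : Set ℕ) : ℕ :=
  Set.ncard {h : ℕ | h ∈ H ∧ (h : ℤ) ∉ trace H}

/-- The number of gaps `g(H)`. -/
noncomputable def gaps (H : Set ℕ) : ℕ := Set.ncard Hᶜ

/-- The number of non-gaps below the Frobenius number, `n(H)`. -/
noncomputable def nongaps (H : Set ℕ) : ℕ :=
  Set.ncard {x : ℕ | x ∈ H ∧ (x : ℤ) < frob H}

/-- `H` is symmetric if for all `x ∈ ℤ`, `x ∈ H` or `Fr(H) - x ∈ H`. -/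
noncomputable def IsSymmetric (H : Set ℕ) : Prop :=
  ∀ z : ℤ, memZ H z ∨ memZ H (frob H - z)

/-- `H` is nearly Gorenstein if `M = H ∖ {0} ⊆ tr(H)`. -/
def NearlyGorenstein (H : Set ℕ) : Prop :=
  ∀ h ∈ H, h ≠ 0 → (h : ℤ) ∈ trace H

/-- The submonoid of ℕ generated by a set. -/
def genBy (A : Set ℕ) : Set ℕ := (AddSubmonoid.closure A : Set ℕ)

end NumSgp

open NumSgp

/-!
Non-symmetry gives a pseudo-Frobenius number `f` other than `F = Fr(H)`, and a semigroup with
three generators has no others: the elements `x n₂ + y n₃` of `Ap(H, n₁)`, each recorded once,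
form a staircase in `ℕ²` meeting every class modulo `n₁` exactly once; its inner corners would
all lie in the class of `0`, so it has at most two outer corners, and pseudo-Frobenius numbers
give distinct outer corners. With `PF(H) = {f, F}`, an `s` lies in `tr(H)` as soon as
`s + (F - f) ∈ H`. So if `tr(H) = C_H`, no `s ∈ H` below `F` has `s + (F - f) ∈ H`; this forces
the Apéry set of the multiplicity `m` to be `{0, f + m, F + m}`, hence `m = 3`, and then
`F = f + 1`. Conversely, for `⟨3, 3a + 1, 3a + 2⟩` the elements of `Ω⁻¹` are at least `6a - 1`,
while `C_H ⊆ tr(H)` holds for every numerical semigroup.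
-/

lemma AddSubmonoid.mul_mem_of_mem {S : AddSubmonoid ℕ} {m : ℕ} (hm : m ∈ S) (k : ℕ) :
    k * m ∈ S := by
  simpa using S.nsmul_mem hm k

lemma Nat.ModEq.exists_eq_add_mul {a b m : ℕ} (h : a ≡ b [MOD m]) (hle : a ≤ b) :
    ∃ k, b = a + k * m := by
  obtain ⟨k, hk⟩ := (Nat.modEq_iff_dvd' hle).mp h
  exact ⟨k, by rw [mul_comm, ← hk]; omega⟩

namespace NumSgp

section Membership

variable {H : Set ℕ} {z : ℤ}

@[simp]
lemma memZ_natCast {n : ℕ} : memZ H n ↔ n ∈ H :=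
  ⟨fun ⟨_, hk, hkn⟩ => Int.ofNat_inj.mp hkn ▸ hk, fun h => ⟨n, h, rfl⟩⟩

lemma memZ_iff : memZ H z ↔ 0 ≤ z ∧ z.toNat ∈ H := by
  constructor
  · rintro ⟨n, hn, rfl⟩
    simpa using hn
  · rintro ⟨hz, h⟩
    exact ⟨z.toNat, h, Int.toNat_of_nonneg hz⟩

lemma memZ_add {S : AddSubmonoid ℕ} (hz : memZ S z) {h : ℕ} (hh : h ∈ S) :
    memZ S (z + h) := by
  obtain ⟨n, hn, rfl⟩ := hz
  exact ⟨n + h, S.add_mem hn hh, by push_cast; rfl⟩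

lemma frob_eq_of_forall_lt (hz : ¬ memZ H z) (h : ∀ y, z < y → memZ H y) : frob H = z :=
  IsGreatest.csSup_eq ⟨hz, fun _ hy => not_lt.mp fun hlt => hy (h _ hlt)⟩

lemma isGreatest_frob (hfin : Hᶜ.Finite) : IsGreatest {z : ℤ | ¬ memZ H z} (frob H) := by
  obtain ⟨B, hB⟩ := hfin.bddAbove
  have hbdd : BddAbove {z : ℤ | ¬ memZ H z} := ⟨B, fun z hz => by
    by_contra! hlt
    exact hz (memZ_iff.mpr ⟨by omega, by_contra fun h => by have := hB h; omega⟩)⟩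
  exact ⟨Int.csSup_mem ⟨-1, fun h => by have := (memZ_iff.mp h).1; omega⟩ hbdd,
    fun _ hz => le_csSup hbdd hz⟩

lemma memZ_of_frob_lt (hfin : Hᶜ.Finite) (hz : frob H < z) : memZ H z :=
  by_contra fun h => absurd ((isGreatest_frob hfin).2 h) (not_le.mpr hz)

lemma frob_mem_pseudoFrob (hfin : Hᶜ.Finite) : frob H ∈ pseudoFrob H :=
  ⟨(isGreatest_frob hfin).1, fun m _ hm => memZ_of_frob_lt hfin (by omega)⟩

lemma le_frob_of_mem_pseudoFrob (hfin : Hᶜ.Finite) {g : ℤ} (hg : g ∈ pseudoFrob H) :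
    g ≤ frob H :=
  (isGreatest_frob hfin).2 hg.1

end Membership

section PseudoFrobenius

variable {S : AddSubmonoid ℕ}

lemma pos_of_mem_pseudoFrob (hfin : (S : Set ℕ)ᶜ.Finite) {g : ℤ} (hg : g ∈ pseudoFrob S)
    (hne : g ≠ frob S) : 0 < g := by
  have hlt := lt_of_le_of_ne (le_frob_of_mem_pseudoFrob hfin hg) hne
  by_contra! hneg
  rcases hneg.lt_or_eq with hneg | rfl
  · obtain ⟨n, hn, hnz⟩ := memZ_of_frob_lt hfin (show frob S < frob S - g by omega)
    have := hg.2 n hn (by omega)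
    rw [hnz, add_sub_cancel] at this
    exact (isGreatest_frob hfin).1 this
  · exact hg.1 (memZ_natCast.mpr S.zero_mem)

/-- A maximal gap `z` with `Fr(S) - z` also a gap is pseudo-Frobenius, and it is not `Fr(S)`. -/
lemma exists_mem_pseudoFrob_ne_frob (hfin : (S : Set ℕ)ᶜ.Finite) (hns : ¬ IsSymmetric S) :
    ∃ f ∈ pseudoFrob S, f ≠ frob S := by
  set P : ℤ → Prop := fun z => ¬ memZ S z ∧ ¬ memZ S (frob S - z)
  obtain ⟨z, hz, hmax⟩ := Int.exists_greatest_of_bdd (P := P)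
    ⟨frob S, fun z hz => (isGreatest_frob hfin).2 hz.1⟩ (by simpa [IsSymmetric] using hns)
  refine ⟨z, ⟨hz.1, fun m hm hm0 => by_contra fun hzm => ?_⟩, fun hzF => ?_⟩
  · have hP : P (z + m) := ⟨hzm, fun h => hz.2 (by simpa [sub_add] using memZ_add h hm)⟩
    have := hmax _ hP
    omega
  · exact hz.2 ⟨0, S.zero_mem, by rw [hzF, sub_self]; rfl⟩

end PseudoFrobenius

section Trace

variable {H : Set ℕ} {S : AddSubmonoid ℕ}

/-- `s = (-Fr(S) + 0) + (s + Fr(S))`, and the hypothesis says exactly that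
`s + Fr(S) ∈ Ω_S⁻¹`. -/
lemma mem_trace_of_forall_memZ (hfin : (S : Set ℕ)ᶜ.Finite) {s : ℤ}
    (hs : ∀ g ∈ pseudoFrob S, memZ S (s + frob S - g)) : s ∈ trace S := by
  refine ⟨-frob S + (0 : ℕ), ⟨frob S, frob_mem_pseudoFrob hfin, 0, S.zero_mem, rfl⟩,
    s + frob S, ?_, by push_cast; ring⟩
  rintro _ ⟨g, hg, h, hh, rfl⟩
  convert memZ_add (hs g hg) hh using 1
  ring

lemma condIdeal_subset_trace (hfin : (S : Set ℕ)ᶜ.Finite) : condIdeal S ⊆ trace S :=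
  fun s hs => mem_trace_of_forall_memZ hfin fun g hg =>
    have hs : frob S < s := hs
    memZ_of_frob_lt hfin (by have := le_frob_of_mem_pseudoFrob hfin hg; omega)

lemma neg_frob_le_of_mem_canIdeal (hfin : Hᶜ.Finite) {w : ℤ} (hw : w ∈ canIdeal H) :
    -frob H ≤ w := by
  obtain ⟨g, hg, h, -, rfl⟩ := hw
  have := le_frob_of_mem_pseudoFrob hfin hg
  omega

lemma memZ_sub_of_mem_antiCanIdeal (h0 : 0 ∈ H) {x g : ℤ} (hx : x ∈ antiCanIdeal H)
    (hg : g ∈ pseudoFrob H) : memZ H (x - g) := by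
  simpa [sub_eq_add_neg] using hx _ ⟨g, hg, 0, h0, rfl⟩

end Trace

/-- The Apéry set `Ap(S, m) = {w ∈ S : w - m ∉ S}`. -/
def apery (S : AddSubmonoid ℕ) (m : ℕ) : Set ℕ := {w | w ∈ S ∧ ∀ h ∈ S, h + m ≠ w}

section Apery

variable {S : AddSubmonoid ℕ} {m w : ℕ}

lemma zero_mem_apery (hm0 : m ≠ 0) : 0 ∈ apery S m :=
  ⟨S.zero_mem, fun _ _ => by omega⟩

lemma mem_of_modEq_of_le (hm : m ∈ S) {h x : ℕ} (hh : h ∈ S) (hmod : h ≡ x [MOD m])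
    (hle : h ≤ x) : x ∈ S := by
  obtain ⟨k, rfl⟩ := hmod.exists_eq_add_mul hle
  exact S.add_mem hh (S.mul_mem_of_mem hm k)

lemma le_of_mem_apery_of_modEq (hm : m ∈ S) (hw : w ∈ apery S m) {h : ℕ} (hh : h ∈ S)
    (hmod : h ≡ w [MOD m]) : w ≤ h := by
  by_contra! hlt
  obtain ⟨_ | k, rfl⟩ := hmod.exists_eq_add_mul hlt.le
  · simp at hlt
  · exact hw.2 (h + k * m) (S.add_mem hh (S.mul_mem_of_mem hm k)) (by ring)

lemma eq_of_mem_apery_of_modEq (hm : m ∈ S) {w' : ℕ} (hw : w ∈ apery S m)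
    (hw' : w' ∈ apery S m) (hmod : w ≡ w' [MOD m]) : w = w' :=
  le_antisymm (le_of_mem_apery_of_modEq hm hw hw'.1 hmod.symm)
    (le_of_mem_apery_of_modEq hm hw' hw.1 hmod)

lemma mem_apery_of_add_mem_apery (hw : w ∈ S) {h : ℕ} (hh : h ∈ S)
    (hwh : w + h ∈ apery S m) : w ∈ apery S m :=
  ⟨hw, fun h' hh' heq => hwh.2 (h' + h) (S.add_mem hh' hh) (by omega)⟩

lemma exists_mem_apery_add_mul (hm0 : m ≠ 0) {h : ℕ} (hh : h ∈ S) :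
    ∃ w ∈ apery S m, ∃ k, h = w + k * m := by
  induction h using Nat.strong_induction_on with
  | _ h ih =>
    by_cases hw : ∃ h' ∈ S, h' + m = h
    · obtain ⟨h', hh', rfl⟩ := hw
      obtain ⟨w, hw, k, rfl⟩ := ih h' (by omega) hh'
      exact ⟨w, hw, k + 1, by ring⟩
    · exact ⟨h, ⟨hh, fun h' hh' heq => hw ⟨h', hh', heq⟩⟩, 0, by simp⟩

lemma exists_mem_apery_modEq (hfin : (S : Set ℕ)ᶜ.Finite) (hm0 : m ≠ 0)
    (v : ℕ) : ∃ w ∈ apery S m, w ≡ v [MOD m] := by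
  obtain ⟨N, hN⟩ := hfin.bddAbove
  have hbig : v + (N + 1) * m ∈ S := by_contra fun h => by
    have := hN h
    nlinarith [Nat.pos_of_ne_zero hm0]
  obtain ⟨w, hw, k, hk⟩ := exists_mem_apery_add_mul hm0 hbig
  refine ⟨w, hw, ?_⟩
  calc w ≡ w + k * m [MOD m] := (Nat.add_mul_mod_self_right w k m).symm
    _ = v + (N + 1) * m := hk.symm
    _ ≡ v [MOD m] := Nat.add_mul_mod_self_right v (N + 1) m

lemma ncard_apery (hfin : (S : Set ℕ)ᶜ.Finite) (hm : m ∈ S) (hm0 : m ≠ 0) :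
    (apery S m).ncard = m := by
  have hinj : Set.InjOn (· % m) (apery S m) :=
    fun _ hw _ hw' hmod => eq_of_mem_apery_of_modEq hm hw hw' hmod
  have himage : (· % m) '' apery S m = ↑(Finset.range m) := by
    ext i
    simp only [Set.mem_image, Finset.coe_range, Set.mem_Iio]
    constructor
    · rintro ⟨w, -, rfl⟩
      exact Nat.mod_lt w (Nat.pos_of_ne_zero hm0)
    · intro hi
      obtain ⟨w, hw, hmod⟩ := exists_mem_apery_modEq hfin hm0 i
      exact ⟨w, hw, Eq.trans hmod (Nat.mod_eq_of_lt hi)⟩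
  rw [← hinj.ncard_image, himage, Set.ncard_coe_finset, Finset.card_range]

/-- Every element of `S` is an element of `Ap(S, m)` plus a multiple of `m`. -/
lemma coe_eq_genBy_of_apery_subset (hm : m ∈ S) (hm0 : m ≠ 0) {A : Set ℕ} (hAS : A ⊆ S)
    (hA : apery S m ⊆ insert 0 A) : (S : Set ℕ) = genBy (insert m A) := by
  refine congrArg SetLike.coe (le_antisymm (fun h hh => ?_)
    (AddSubmonoid.closure_le.mpr (Set.insert_subset hm hAS)))
  obtain ⟨w, hw, k, rfl⟩ := exists_mem_apery_add_mul hm0 hh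
  refine add_mem ?_
    (AddSubmonoid.mul_mem_of_mem (AddSubmonoid.subset_closure (Set.mem_insert m A)) k)
  rcases hA hw with rfl | hwA
  exacts [zero_mem _, AddSubmonoid.subset_closure (Set.mem_insert_of_mem m hwA)]

lemma exists_mem_apery_of_mem_pseudoFrob (hm : m ∈ S) (hm0 : m ≠ 0) {g : ℤ}
    (hg : g ∈ pseudoFrob S) : ∃ w ∈ apery S m, (w : ℤ) = g + m := by
  obtain ⟨w, hw, hwg⟩ := hg.2 m hm hm0
  exact ⟨w, ⟨hw, fun h hh heq => hg.1 ⟨h, hh, by omega⟩⟩, hwg⟩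

lemma add_notMem_apery_of_mem_pseudoFrob {g : ℤ} (hg : g ∈ pseudoFrob S)
    (hwg : (w : ℤ) = g + m) {h : ℕ} (hh : h ∈ S) (h0 : h ≠ 0) : w + h ∉ apery S m := by
  rintro ⟨-, hmax⟩
  obtain ⟨n, hn, hng⟩ := hg.2 h hh h0
  exact hmax n hn (by omega)

lemma mem_pseudoFrob_of_mem_apery (hfin : (S : Set ℕ)ᶜ.Finite)
    (hmin : ∀ h ∈ S, h ≠ 0 → m ≤ h) (hw : w ∈ apery S m) (hlt : frob S < w) :
    (w : ℤ) - m ∈ pseudoFrob S :=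
  ⟨fun ⟨n, hn, hnw⟩ => hw.2 n hn (by omega),
    fun h hh h0 => memZ_of_frob_lt hfin (by have := hmin h hh h0; omega)⟩

end Apery

section LowerSet

variable {G : Type*} [AddCancelCommMonoid G] {T : Set (ℕ × ℕ)} {φ : ℕ × ℕ →+ G}
  {p p' : ℕ × ℕ}

lemma lt_and_lt_or_lt_and_lt_of_maximal (hp : Maximal (· ∈ T) p) (hp' : Maximal (· ∈ T) p')
    (hne : p ≠ p') : (p'.1 < p.1 ∧ p.2 < p'.2) ∨ (p.1 < p'.1 ∧ p'.2 < p.2) := by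
  have h₁ : ¬ p ≤ p' := fun h => hne (hp.eq_of_le hp'.prop h)
  have h₂ : ¬ p' ≤ p := fun h => hne (hp'.eq_of_le hp.prop h).symm
  simp only [Prod.le_def, not_and_or, not_le] at h₁ h₂
  omega

lemma mem_of_map_add_eq (hT : IsLowerSet T) (hinj : Set.InjOn φ T) {r q e : ℕ × ℕ}
    (hr : r + e ∈ T) (hq : q ∈ T) (h : φ (r + e) = φ (q + e)) : q + e ∈ T := by
  have hr' : r ∈ T := hT le_self_add hr
  rw [map_add, map_add, add_left_inj] at h
  rwa [← hinj hr' hq h]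

lemma map_eq_zero_of_inner_corner (hT : IsLowerSet T) (hinj : Set.InjOn φ T)
    (hcov : ∀ q, ∃ r ∈ T, φ r = φ q) {u y : ℕ} (hleft : (u, y + 1) ∈ T)
    (hbelow : (u + 1, y) ∈ T) (hcorner : (u + 1, y + 1) ∉ T) : φ (u + 1, y + 1) = 0 := by
  obtain ⟨⟨_ | x, _ | z⟩, hr, hφ⟩ := hcov (u + 1, y + 1)
  · rw [← hφ, Prod.mk_zero_zero, map_zero]
  · exact absurd (mem_of_map_add_eq (r := (0, z)) (e := (0, 1)) hT hinj hr hbelow hφ) hcorner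
  · exact absurd (mem_of_map_add_eq (r := (x, 0)) (e := (1, 0)) hT hinj hr hleft hφ) hcorner
  · exact absurd (mem_of_map_add_eq (r := (x, z + 1)) (e := (1, 0)) hT hinj hr hleft hφ) hcorner

lemma exists_inner_corner (hT : IsLowerSet T) (hp : Maximal (· ∈ T) p)
    (hup : (0, p.2 + 1) ∈ T) :
    ∃ u, (u, p.2 + 1) ∈ T ∧ (u + 1, p.2) ∈ T ∧ (u + 1, p.2 + 1) ∉ T := by
  classical
  have hraise : ∀ {k}, p.1 ≤ k → (k, p.2 + 1) ∉ T := fun hk h => by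
    simpa using congrArg Prod.snd (hp.eq_of_le h ⟨hk, Nat.le_succ _⟩)
  have hex : ∃ k, (k, p.2 + 1) ∉ T := ⟨p.1, hraise le_rfl⟩
  obtain ⟨u, hu⟩ : ∃ u, Nat.find hex = u + 1 :=
    Nat.exists_eq_add_one.mpr (Nat.pos_of_ne_zero fun h => Nat.find_spec hex (h ▸ hup))
  refine ⟨u, not_not.mp (Nat.find_min hex (by omega)), hT ?_ hp.prop, hu ▸ Nat.find_spec hex⟩
  exact ⟨hu ▸ Nat.find_min' hex (hraise le_rfl), le_rfl⟩

lemma exists_map_add_eq_zero (hT : IsLowerSet T) (hinj : Set.InjOn φ T)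
    (hcov : ∀ q, ∃ r ∈ T, φ r = φ q) (hp : Maximal (· ∈ T) p) (hup : (0, p.2 + 1) ∈ T) :
    ∃ u, (u + 1, p.2) ∈ T ∧ φ (u + 1, p.2) + φ (0, 1) = 0 := by
  obtain ⟨u, hleft, hbelow, hcorner⟩ := exists_inner_corner hT hp hup
  refine ⟨u, hbelow, ?_⟩
  rw [← map_add]
  exact map_eq_zero_of_inner_corner hT hinj hcov hleft hbelow hcorner

/-- Both `p` and `p'` sit below an inner corner in the class of `0`, so the cells just below
these corners have the same image under `φ`, hence coincide. -/
lemma eq_of_maximal_of_mem_above (hT : IsLowerSet T) (hinj : Set.InjOn φ T)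
    (hcov : ∀ q, ∃ r ∈ T, φ r = φ q) (hp : Maximal (· ∈ T) p) (hp' : Maximal (· ∈ T) p')
    (hup : (0, p.2 + 1) ∈ T) (hup' : (0, p'.2 + 1) ∈ T) : p = p' := by
  obtain ⟨u, hu, hφu⟩ := exists_map_add_eq_zero hT hinj hcov hp hup
  obtain ⟨u', hu', hφu'⟩ := exists_map_add_eq_zero hT hinj hcov hp' hup'
  have h₂ : p.2 = p'.2 := (Prod.ext_iff.mp (hinj hu hu' (add_right_cancel (hφu.trans hφu'.symm)))).2
  by_contra hne
  rcases lt_and_lt_or_lt_and_lt_of_maximal hp hp' hne with h | h <;> omega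

theorem eq_or_eq_or_eq_of_maximal (hT : IsLowerSet T) (hinj : Set.InjOn φ T)
    (hcov : ∀ q, ∃ r ∈ T, φ r = φ q) {p₁ p₂ p₃ : ℕ × ℕ} (h₁ : Maximal (· ∈ T) p₁)
    (h₂ : Maximal (· ∈ T) p₂) (h₃ : Maximal (· ∈ T) p₃) : p₁ = p₂ ∨ p₁ = p₃ ∨ p₂ = p₃ := by
  have above : ∀ {p p'}, Maximal (· ∈ T) p → Maximal (· ∈ T) p' → p ≠ p' →
      (0, p.2 + 1) ∈ T ∨ (0, p'.2 + 1) ∈ T := fun hp hp' hne => by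
    rcases lt_and_lt_or_lt_and_lt_of_maximal hp hp' hne with h | h
    · exact .inl (hT ⟨Nat.zero_le _, h.2⟩ hp'.prop)
    · exact .inr (hT ⟨Nat.zero_le _, h.2⟩ hp.prop)
  have hunique := fun {p p'} => eq_of_maximal_of_mem_above (p := p) (p' := p') hT hinj hcov
  by_contra! hne
  obtain ⟨h12, h13, h23⟩ := hne
  by_cases h1 : (0, p₁.2 + 1) ∈ T
  · rcases above h₂ h₃ h23 with h | h
    exacts [h12 (hunique h₁ h₂ h1 h), h13 (hunique h₁ h₃ h1 h)]
  · exact h23 (hunique h₂ h₃ ((above h₁ h₂ h12).resolve_left h1)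
      ((above h₁ h₃ h13).resolve_left h1))

end LowerSet

def weight (b c : ℕ) : ℕ × ℕ →+ ℕ where
  toFun p := p.1 * b + p.2 * c
  map_zero' := by simp
  map_add' p q := by simp only [Prod.fst_add, Prod.snd_add]; ring

/-- Each element of `A` of the form `x b + y c`, recorded by the coordinates `(x, y)` with the
least `y`. -/
def staircase (A : Set ℕ) (b c : ℕ) : Set (ℕ × ℕ) :=
  {p | weight b c p ∈ A ∧ ∀ q, weight b c q = weight b c p → p.2 ≤ q.2}

section Staircase

variable {A : Set ℕ} {b c : ℕ}

lemma weight_mem {S : AddSubmonoid ℕ} (hb : b ∈ S) (hc : c ∈ S) (p : ℕ × ℕ) :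
    weight b c p ∈ S :=
  S.add_mem (S.mul_mem_of_mem hb p.1) (S.mul_mem_of_mem hc p.2)

lemma isLowerSet_staircase (hA : ∀ p r, weight b c (p + r) ∈ A → weight b c p ∈ A) :
    IsLowerSet (staircase A b c) := by
  intro p q hqp hp
  obtain ⟨r, rfl⟩ := exists_add_of_le hqp
  refine ⟨hA q r hp.1, fun q' hq' => ?_⟩
  have := hp.2 (q' + r) (by rw [map_add, map_add, hq'])
  simpa using this

lemma injOn_weight_staircase (hb : b ≠ 0) : Set.InjOn (weight b c) (staircase A b c) := by
  intro p hp q hq h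
  have h₂ : p.2 = q.2 := le_antisymm (hp.2 q h.symm) (hq.2 p h)
  have h₁ : p.1 * b = q.1 * b := by
    have : p.1 * b + p.2 * c = q.1 * b + q.2 * c := h
    rw [h₂] at this
    omega
  exact Prod.ext (Nat.eq_of_mul_eq_mul_right (Nat.pos_of_ne_zero hb) h₁) h₂

lemma exists_mem_staircase {w : ℕ} (hw : w ∈ A) (hrep : ∃ p, weight b c p = w) :
    ∃ p ∈ staircase A b c, weight b c p = w := by
  classical
  have hex : ∃ y x, weight b c (x, y) = w := let ⟨p, hp⟩ := hrep; ⟨p.2, p.1, hp⟩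
  obtain ⟨x, hx⟩ := Nat.find_spec hex
  exact ⟨(x, Nat.find hex), ⟨by rwa [hx], fun q hq => Nat.find_min' hex ⟨q.1, hq.trans hx⟩⟩, hx⟩

end Staircase

section ThreeGenerators

variable {n₁ n₂ n₃ : ℕ}

lemma exists_weight_eq_of_mem_apery {w : ℕ}
    (hw : w ∈ apery (AddSubmonoid.closure {n₁, n₂, n₃}) n₁) : ∃ p, weight n₂ n₃ p = w := by
  have hw₁ := hw.1
  rw [← Set.singleton_union, AddSubmonoid.closure_union, AddSubmonoid.mem_sup] at hw₁
  obtain ⟨_, hy, _, hz, rfl⟩ := hw₁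
  obtain ⟨a, rfl⟩ := AddSubmonoid.mem_closure_singleton.mp hy
  obtain ⟨x, y, rfl⟩ := (AddSubmonoid.mem_closure_pair _ _ _).mp hz
  cases a with
  | zero => exact ⟨(x, y), by simp [weight]⟩
  | succ a =>
    have hmem : ∀ n ∈ ({n₁, n₂, n₃} : Set ℕ), ∀ k : ℕ, k • n ∈ AddSubmonoid.closure {n₁, n₂, n₃} :=
      fun n hn k => nsmul_mem (AddSubmonoid.subset_closure hn) k
    refine (hw.2 (a • n₁ + (x • n₂ + y • n₃)) ?_ (by rw [succ_nsmul]; abel)).elim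
    exact add_mem (hmem _ (by simp) a) (add_mem (hmem _ (by simp) x) (hmem _ (by simp) y))

lemma exists_maximal_staircase_of_mem_pseudoFrob (h₁ : n₁ ≠ 0) (h₂ : n₂ ≠ 0) (h₃ : n₃ ≠ 0)
    {g : ℤ} (hg : g ∈ pseudoFrob (AddSubmonoid.closure {n₁, n₂, n₃})) :
    ∃ p, Maximal (· ∈ staircase (apery (AddSubmonoid.closure {n₁, n₂, n₃}) n₁) n₂ n₃) p ∧
      (weight n₂ n₃ p : ℤ) = g + n₁ := by
  obtain ⟨w, hw, hwg⟩ := exists_mem_apery_of_mem_pseudoFrob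
    (AddSubmonoid.subset_closure (by simp)) h₁ hg
  obtain ⟨p, hp, rfl⟩ := exists_mem_staircase hw (exists_weight_eq_of_mem_apery hw)
  refine ⟨p, ⟨hp, fun q hq hpq => ?_⟩, hwg⟩
  obtain ⟨r, rfl⟩ := exists_add_of_le hpq
  have hr : weight n₂ n₃ r = 0 := by
    by_contra hr
    refine add_notMem_apery_of_mem_pseudoFrob hg hwg ?_ hr (by rw [← map_add]; exact hq.1)
    exact weight_mem (AddSubmonoid.subset_closure (by simp))
      (AddSubmonoid.subset_closure (by simp)) r
  have : r = 0 := by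
    simp only [weight, AddMonoidHom.coe_mk, ZeroHom.coe_mk, Nat.add_eq_zero_iff,
      mul_eq_zero, h₂, h₃, or_false] at hr
    exact Prod.ext hr.1 hr.2
  simp [this]

theorem eq_or_eq_or_eq_of_mem_pseudoFrob
    (hfin : (AddSubmonoid.closure {n₁, n₂, n₃} : Set ℕ)ᶜ.Finite)
    (h₁ : n₁ ≠ 0) (h₂ : n₂ ≠ 0) (h₃ : n₃ ≠ 0) {g₁ g₂ g₃ : ℤ}
    (hg₁ : g₁ ∈ pseudoFrob (AddSubmonoid.closure {n₁, n₂, n₃}))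
    (hg₂ : g₂ ∈ pseudoFrob (AddSubmonoid.closure {n₁, n₂, n₃}))
    (hg₃ : g₃ ∈ pseudoFrob (AddSubmonoid.closure {n₁, n₂, n₃})) :
    g₁ = g₂ ∨ g₁ = g₃ ∨ g₂ = g₃ := by
  set S := AddSubmonoid.closure {n₁, n₂, n₃}
  have hn₁ : n₁ ∈ S := AddSubmonoid.subset_closure (by simp)
  have hn₂ : n₂ ∈ S := AddSubmonoid.subset_closure (by simp)
  have hn₃ : n₃ ∈ S := AddSubmonoid.subset_closure (by simp)
  let φ : ℕ × ℕ →+ ZMod n₁ := (Nat.castAddMonoidHom _).comp (weight n₂ n₃)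
  have hT : IsLowerSet (staircase (apery S n₁) n₂ n₃) := isLowerSet_staircase fun p r h =>
    mem_apery_of_add_mem_apery (weight_mem hn₂ hn₃ p) (weight_mem hn₂ hn₃ r) (by rwa [← map_add])
  have hinj : Set.InjOn φ (staircase (apery S n₁) n₂ n₃) := fun p hp q hq h =>
    injOn_weight_staircase h₂ hp hq (eq_of_mem_apery_of_modEq hn₁ hp.1 hq.1
      ((ZMod.natCast_eq_natCast_iff _ _ _).mp h))
  have hcov : ∀ q, ∃ r ∈ staircase (apery S n₁) n₂ n₃, φ r = φ q := fun q => by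
    obtain ⟨w, hw, hmod⟩ := exists_mem_apery_modEq hfin h₁ (weight n₂ n₃ q)
    obtain ⟨r, hr, rfl⟩ := exists_mem_staircase hw (exists_weight_eq_of_mem_apery hw)
    exact ⟨r, hr, (ZMod.natCast_eq_natCast_iff _ _ _).mpr hmod⟩
  obtain ⟨p₁, hp₁, e₁⟩ := exists_maximal_staircase_of_mem_pseudoFrob h₁ h₂ h₃ hg₁
  obtain ⟨p₂, hp₂, e₂⟩ := exists_maximal_staircase_of_mem_pseudoFrob h₁ h₂ h₃ hg₂
  obtain ⟨p₃, hp₃, e₃⟩ := exists_maximal_staircase_of_mem_pseudoFrob h₁ h₂ h₃ hg₃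
  rcases eq_or_eq_or_eq_of_maximal hT hinj hcov hp₁ hp₂ hp₃ with rfl | rfl | rfl <;> omega

end ThreeGenerators

section TraceEqConductor

variable {S : AddSubmonoid ℕ} {f d m : ℕ}

lemma exists_multiplicity (hfin : (S : Set ℕ)ᶜ.Finite) :
    ∃ m ∈ S, m ≠ 0 ∧ ∀ h ∈ S, h ≠ 0 → m ≤ h := by
  classical
  obtain ⟨N, hN⟩ := hfin.bddAbove
  have hex : ∃ n, n ∈ S ∧ n ≠ 0 := ⟨N + 1, by_contra fun h => by have := hN h; omega, by omega⟩
  exact ⟨Nat.find hex, (Nat.find_spec hex).1, (Nat.find_spec hex).2,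
    fun h hh h0 => Nat.find_min' hex ⟨hh, h0⟩⟩

/-- Otherwise `s` would lie in the trace: `s + Fr(S) - g ∈ S` for both `g ∈ PF(S) = {f, f + d}`. -/
lemma add_notMem_of_trace_eq_condIdeal (hfin : (S : Set ℕ)ᶜ.Finite) (hF : frob S = f + d)
    (hPF : ∀ g ∈ pseudoFrob S, g = f ∨ g = frob S) (htr : trace S = condIdeal S)
    {s : ℕ} (hs : s ∈ S) (hsF : s ≤ f + d) : s + d ∉ S := by
  intro hsd
  have hs' : (s : ℤ) ∈ condIdeal S := htr ▸ mem_trace_of_forall_memZ hfin fun g hg => by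
    rcases hPF g hg with rfl | rfl
    · rw [hF]
      convert memZ_natCast.mpr hsd using 1
      push_cast
      ring
    · simpa using hs
  have : frob S < s := hs'
  omega

lemma eq_or_eq_of_mem_apery_of_lt (hfin : (S : Set ℕ)ᶜ.Finite) (hF : frob S = f + d)
    (hPF : ∀ g ∈ pseudoFrob S, g = f ∨ g = frob S) (hmin : ∀ h ∈ S, h ≠ 0 → m ≤ h) {w : ℕ}
    (hw : w ∈ apery S m) (hlt : f + d < w) : w = f + m ∨ w = f + m + d := by
  rcases hPF _ (mem_pseudoFrob_of_mem_apery hfin hmin hw (by omega)) with h | h <;> omega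

/-- The element of `Ap(S, m)` in the class of `w + d` lies above `s + d`, where `s` is the
largest element of the class of `w` up to `F`; so it exceeds `F`, and it cannot be `V + d`. -/
lemma modEq_add_of_mem_apery_of_le (hfin : (S : Set ℕ)ᶜ.Finite) (hm : m ∈ S) (hm0 : m ≠ 0)
    {F V : ℕ} (hgap : ∀ s ∈ S, s ≤ F → s + d ∉ S)
    (htop : ∀ w ∈ apery S m, F < w → w = V ∨ w = V + d) (hV : V ∈ apery S m) (hFV : F < V)
    {w : ℕ} (hw : w ∈ apery S m) (hwF : w ≤ F) : V ≡ w + d [MOD m] := by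
  set s := w + (F - w) / m * m
  have hsw : s ≡ w [MOD m] := Nat.add_mul_mod_self_right w _ m
  have hsF : s ≤ F := by have := Nat.div_mul_le_self (F - w) m; omega
  have hFs : F < s + m := by
    have := Nat.lt_div_mul_add (a := F - w) (Nat.pos_of_ne_zero hm0)
    omega
  have hs : s ∈ S := S.add_mem hw.1 (S.mul_mem_of_mem hm _)
  obtain ⟨w', hw', hmod⟩ := exists_mem_apery_modEq hfin hm0 (s + d)
  have hlt : s + d < w' := by
    by_contra! hle
    exact hgap s hs hsF (mem_of_modEq_of_le hm hw'.1 hmod hle)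
  have hFw' : F < w' := by
    have : ¬ w' < s + d + m := fun h => absurd (hmod.le_of_lt_add h) (not_le.mpr hlt)
    omega
  rcases htop w' hw' hFw' with rfl | rfl
  · exact hmod.trans (hsw.add_right d)
  · have := eq_of_mem_apery_of_modEq hm hV hw ((hmod.trans (hsw.add_right d)).add_right_cancel' d)
    omega

lemma apery_subset_of_gap (hfin : (S : Set ℕ)ᶜ.Finite) (hm : m ∈ S) (hm0 : m ≠ 0)
    {F V : ℕ} (hgap : ∀ s ∈ S, s ≤ F → s + d ∉ S)
    (htop : ∀ w ∈ apery S m, F < w → w = V ∨ w = V + d) (hV : V ∈ apery S m) (hFV : F < V) :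
    apery S m ⊆ {0, V, V + d} := by
  intro w hw
  rcases le_or_gt w F with hwF | hFw
  · have h₀ := modEq_add_of_mem_apery_of_le hfin hm hm0 hgap htop hV hFV (zero_mem_apery hm0)
      (Nat.zero_le F)
    have h₁ := modEq_add_of_mem_apery_of_le hfin hm hm0 hgap htop hV hFV hw hwF
    exact .inl (eq_of_mem_apery_of_modEq hm hw (zero_mem_apery hm0)
      ((h₁.symm.trans h₀).add_right_cancel' d))
  · rcases htop w hw hFw with rfl | rfl <;> simp

lemma exists_eq_genBy_of_apery_eq (hm : 3 ∈ S) (hd : d ≠ 0) (hd3 : d < 3)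
    (hgap : ∀ s ∈ S, s ≤ f + d → s + d ∉ S) (hAp : apery S 3 = {0, f + 3, f + 3 + d}) :
    ∃ a, 0 < a ∧ (S : Set ℕ) = genBy {3, 3 * a + 1, 3 * a + 2} := by
  have hmem : ∀ w ∈ ({0, f + 3, f + 3 + d} : Set ℕ), w ∈ apery S 3 := fun w hw => hAp ▸ hw
  have hcls : ∀ w ∈ ({0, f + 3, f + 3 + d} : Set ℕ), ∀ w' ∈ ({0, f + 3, f + 3 + d} : Set ℕ),
      w % 3 = w' % 3 → w = w' := fun w hw w' hw' =>
    eq_of_mem_apery_of_modEq hm (hmem w hw) (hmem w' hw')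
  have h₁ := hcls 0 (by simp) (f + 3) (by simp)
  have h₂ := hcls 0 (by simp) (f + 3 + d) (by simp)
  have h₃ := hcls (f + 3) (by simp) (f + 3 + d) (by simp)
  have hV : f + 3 ∈ S := (hmem _ (by simp)).1
  have hW : f + 3 + d ∈ S := (hmem _ (by simp)).1
  obtain rfl : d = 1 := by
    by_contra hd1
    have hmul : f + 1 ∈ S := by
      obtain ⟨k, hk⟩ : 3 ∣ f + 1 := by omega
      rw [hk, mul_comm]
      exact S.mul_mem_of_mem hm k
    exact hgap _ hmul (by omega) (by rwa [show f + 1 + d = f + 3 by omega])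
  refine ⟨(f + 2) / 3, by omega, ?_⟩
  rw [show 3 * ((f + 2) / 3) + 1 = f + 3 by omega, show 3 * ((f + 2) / 3) + 2 = f + 3 + 1 by omega]
  exact coe_eq_genBy_of_apery_subset hm three_ne_zero
    (Set.insert_subset hV (Set.singleton_subset_iff.mpr hW)) hAp.le

lemma exists_eq_genBy_of_gap (hfin : (S : Set ℕ)ᶜ.Finite) (hF : frob S = f + d) (hd : d ≠ 0)
    (hf : (f : ℤ) ∈ pseudoFrob S) (hPF : ∀ g ∈ pseudoFrob S, g = f ∨ g = frob S)
    (hgap : ∀ s ∈ S, s ≤ f + d → s + d ∉ S) :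
    ∃ a, 0 < a ∧ (S : Set ℕ) = genBy {3, 3 * a + 1, 3 * a + 2} := by
  obtain ⟨m, hm, hm0, hmin⟩ := exists_multiplicity hfin
  have hV : f + m ∈ apery S m := by
    obtain ⟨w, hw, hwf⟩ := exists_mem_apery_of_mem_pseudoFrob hm hm0 hf
    rwa [show w = f + m by omega] at hw
  have hW : f + m + d ∈ apery S m := by
    obtain ⟨w, hw, hwF⟩ := exists_mem_apery_of_mem_pseudoFrob hm hm0 (frob_mem_pseudoFrob hfin)
    rwa [show w = f + m + d by omega] at hw
  have hFV : f + d < f + m := by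
    by_contra! h
    exact hgap _ hV.1 h hW.1
  have hAp : apery S m = {0, f + m, f + m + d} := by
    refine (apery_subset_of_gap hfin hm hm0 hgap
      (fun _ hw hlt => eq_or_eq_of_mem_apery_of_lt hfin hF hPF hmin hw hlt) hV hFV).antisymm ?_
    rintro w (rfl | rfl | rfl)
    exacts [zero_mem_apery hm0, hV, hW]
  obtain rfl : m = 3 := by
    rw [← ncard_apery hfin hm hm0, hAp, Set.ncard_eq_three]
    exact ⟨0, f + m, f + m + d, by omega, by omega, by omega, rfl⟩
  exact exists_eq_genBy_of_apery_eq hm hd (by omega) hgap hAp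

theorem exists_eq_genBy_of_trace_eq_condIdeal (hfin : (S : Set ℕ)ᶜ.Finite) {f : ℤ}
    (hf : f ∈ pseudoFrob S) (hfF : f ≠ frob S) (hPF : ∀ g ∈ pseudoFrob S, g = f ∨ g = frob S)
    (htr : trace S = condIdeal S) :
    ∃ a, 0 < a ∧ (S : Set ℕ) = genBy {3, 3 * a + 1, 3 * a + 2} := by
  have hf0 := pos_of_mem_pseudoFrob hfin hf hfF
  have hfF' := lt_of_le_of_ne (le_frob_of_mem_pseudoFrob hfin hf) hfF
  lift f to ℕ using hf0.le
  obtain ⟨d, hd⟩ : ∃ d : ℕ, frob S = f + d := ⟨(frob S - f).toNat, by omega⟩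
  exact exists_eq_genBy_of_gap hfin hd (by omega) hf hPF
    fun s hs hsF => add_notMem_of_trace_eq_condIdeal hfin hd hPF htr hs hsF

end TraceEqConductor

section ThreeAPlus

variable {a : ℕ}

lemma mem_closure_three_iff {n : ℕ} :
    n ∈ AddSubmonoid.closure {3, 3 * a + 1, 3 * a + 2} ↔ 3 ∣ n ∨ 3 * a + 1 ≤ n := by
  constructor
  · intro hn
    induction hn using AddSubmonoid.closure_induction with
    | mem x hx => rcases hx with rfl | rfl | rfl <;> omega
    | zero => omega
    | add x y _ _ hx hy => omega
  · intro hn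
    have h3 : 3 ∈ AddSubmonoid.closure {3, 3 * a + 1, 3 * a + 2} :=
      AddSubmonoid.subset_closure (by simp)
    rcases (by omega : 3 ∣ n ∨ (n % 3 = 1 ∧ 3 * a + 1 ≤ n) ∨ (n % 3 = 2 ∧ 3 * a + 2 ≤ n))
      with ⟨k, rfl⟩ | h | h
    · rw [mul_comm 3 k]
      exact AddSubmonoid.mul_mem_of_mem h3 k
    · rw [show n = 3 * a + 1 + (n - (3 * a + 1)) / 3 * 3 by omega]
      exact add_mem (AddSubmonoid.subset_closure (by simp)) (AddSubmonoid.mul_mem_of_mem h3 _)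
    · rw [show n = 3 * a + 2 + (n - (3 * a + 2)) / 3 * 3 by omega]
      exact add_mem (AddSubmonoid.subset_closure (by simp)) (AddSubmonoid.mul_mem_of_mem h3 _)

lemma memZ_genBy_three_iff {z : ℤ} :
    memZ (genBy {3, 3 * a + 1, 3 * a + 2}) z ↔ 0 ≤ z ∧ (3 ∣ z ∨ 3 * a + 1 ≤ z) := by
  rw [memZ_iff]
  simp only [genBy, SetLike.mem_coe, mem_closure_three_iff]
  omega

/-- Here `PF = {3a - 2, 3a - 1}`, and an element `x` of `Ω⁻¹` has `x - (3a - 1)` and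
`x - (3a - 2)` in `S`, two consecutive elements, so `x - (3a - 1) ≥ 3a`. -/
theorem trace_genBy_three_eq_condIdeal (ha : 0 < a) :
    trace (genBy {3, 3 * a + 1, 3 * a + 2}) = condIdeal (genBy {3, 3 * a + 1, 3 * a + 2}) := by
  have hfin : (genBy {3, 3 * a + 1, 3 * a + 2})ᶜ.Finite :=
    (Set.finite_Iio (3 * a + 1)).subset fun n hn => by
      simp only [Set.mem_compl_iff, genBy, SetLike.mem_coe, mem_closure_three_iff] at hn
      simp only [Set.mem_Iio]
      omega
  have hF : frob (genBy {3, 3 * a + 1, 3 * a + 2}) = 3 * a - 1 :=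
    frob_eq_of_forall_lt (by rw [memZ_genBy_three_iff]; omega)
      fun y hy => by rw [memZ_genBy_three_iff]; omega
  have hPF : (3 * a - 2 : ℤ) ∈ pseudoFrob (genBy {3, 3 * a + 1, 3 * a + 2}) := by
    refine ⟨by rw [memZ_genBy_three_iff]; omega, fun h hh h0 => ?_⟩
    have := memZ_genBy_three_iff.mp (memZ_natCast.mpr hh)
    rw [memZ_genBy_three_iff]
    omega
  refine Set.Subset.antisymm ?_ (condIdeal_subset_trace (S := AddSubmonoid.closure _) hfin)
  rintro _ ⟨w, hw, x, hx, rfl⟩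
  have h0 : 0 ∈ genBy {3, 3 * a + 1, 3 * a + 2} := zero_mem _
  have h₁ := memZ_genBy_three_iff.mp
    (memZ_sub_of_mem_antiCanIdeal h0 hx (frob_mem_pseudoFrob hfin))
  have h₂ := memZ_genBy_three_iff.mp (memZ_sub_of_mem_antiCanIdeal h0 hx hPF)
  have hw' := neg_frob_le_of_mem_canIdeal hfin hw
  show frob _ < w + x
  rw [hF] at h₁ hw' ⊢
  omega

end ThreeAPlus

lemma ne_zero_of_forall_genBy_ne {n₁ n₂ n₃ : ℕ}
    (h : ∀ x y : ℕ, genBy {n₁, n₂, n₃} ≠ genBy {x, y}) : n₁ ≠ 0 ∧ n₂ ≠ 0 ∧ n₃ ≠ 0 := by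
  have hzero : ∀ x y : ℕ, genBy {0, x, y} = genBy {x, y} :=
    fun x y => congrArg SetLike.coe (AddSubmonoid.closure_insert_zero _)
  refine ⟨?_, ?_, ?_⟩ <;> rintro rfl
  · exact h _ _ (hzero _ _)
  · exact h n₁ n₃ (by rw [Set.insert_comm]; exact hzero _ _)
  · exact h n₁ n₂ (by rw [Set.pair_comm n₂ 0, Set.insert_comm]; exact hzero _ _)

end NumSgp

/-- for a non-symmetric 3-generated numerical semigroup,
`tr(H) = C_H` iff `H = ⟨3, 3a+1, 3a+2⟩` for some positive integer `a`. -/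
theorem stmt_12 (H : Set ℕ) (hnum : IsNumSgp H)
    (hgen : ∃ n₁ n₂ n₃ : ℕ, H = genBy {n₁, n₂, n₃})
    (hmin : ∀ x y : ℕ, H ≠ genBy {x, y})
    (hns : ¬ IsSymmetric H) :
    trace H = condIdeal H ↔
      ∃ a : ℕ, 0 < a ∧ H = genBy {3, 3 * a + 1, 3 * a + 2} := by
  obtain ⟨n₁, n₂, n₃, rfl⟩ := hgen
  have hfin : (AddSubmonoid.closure {n₁, n₂, n₃} : Set ℕ)ᶜ.Finite := hnum.2.2
  constructor
  · intro htr
    obtain ⟨h₁, h₂, h₃⟩ := ne_zero_of_forall_genBy_ne hmin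
    obtain ⟨f, hf, hfF⟩ := exists_mem_pseudoFrob_ne_frob hfin hns
    refine exists_eq_genBy_of_trace_eq_condIdeal hfin hf hfF (fun g hg => ?_) htr
    rcases eq_or_eq_or_eq_of_mem_pseudoFrob hfin h₁ h₂ h₃ hg hf (frob_mem_pseudoFrob hfin)
      with h | h | h
    exacts [.inl h, .inr h, absurd h hfF]
  · rintro ⟨a, ha, hH⟩
    rw [hH]
    exact trace_genBy_three_eq_condIdeal ha
end

section
/- For every positive integer a, the numerical semigroup H generated by {3, 3a+1, 3a+2} satisfies res(H) = a. -/
open NumSgp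

namespace Stmt16

open NumSgp

/-- The set that `genBy {3, 3a+1, 3a+2}` turns out to be. -/
def Hn (a : ℕ) : Set ℕ := {n | 3 ∣ n ∨ 3 * a + 1 ≤ n}

/-- `Hn a` as an additive submonoid. -/
def Sn (a : ℕ) : AddSubmonoid ℕ where
  carrier := Hn a
  zero_mem' := Or.inl ⟨0, rfl⟩
  add_mem' := by
    intro x y hx hy
    simp only [Hn, Set.mem_setOf_eq] at *
    omega

lemma genBy_eq (a : ℕ) : genBy {3, 3 * a + 1, 3 * a + 2} = Hn a := by
  apply subset_antisymm
  · have : AddSubmonoid.closure {3, 3 * a + 1, 3 * a + 2} ≤ Sn a := by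
      rw [AddSubmonoid.closure_le]
      intro n hn
      simp only [Set.mem_insert_iff, Set.mem_singleton_iff] at hn
      show n ∈ Hn a
      simp only [Hn, Set.mem_setOf_eq]
      omega
    exact fun n hn => this hn
  · intro n hn
    simp only [Hn, Set.mem_setOf_eq] at hn
    have h3 : (3 : ℕ) ∈ AddSubmonoid.closure {3, 3 * a + 1, 3 * a + 2} :=
      AddSubmonoid.subset_closure (by simp)
    have h1 : 3 * a + 1 ∈ AddSubmonoid.closure {3, 3 * a + 1, 3 * a + 2} :=
      AddSubmonoid.subset_closure (by simp)
    have h2 : 3 * a + 2 ∈ AddSubmonoid.closure {3, 3 * a + 1, 3 * a + 2} :=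
      AddSubmonoid.subset_closure (by simp)
    have hmul : ∀ k : ℕ, 3 * k ∈ AddSubmonoid.closure {3, 3 * a + 1, 3 * a + 2} := by
      intro k
      have := AddSubmonoid.nsmul_mem (AddSubmonoid.closure {3, 3 * a + 1, 3 * a + 2}) h3 k
      simpa [smul_eq_mul, mul_comm] using this
    show n ∈ AddSubmonoid.closure {3, 3 * a + 1, 3 * a + 2}
    have hlt : n % 3 = 0 ∨ n % 3 = 1 ∨ n % 3 = 2 := by omega
    rcases hlt with h | h | h
    · obtain ⟨k, rfl⟩ : ∃ k, n = 3 * k := ⟨n / 3, by omega⟩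
      exact hmul k
    · obtain ⟨k, rfl⟩ : ∃ k, n = (3 * a + 1) + 3 * k := by
        rcases hn with hd | hge
        · omega
        · exact ⟨(n - (3 * a + 1)) / 3, by omega⟩
      exact AddSubmonoid.add_mem _ h1 (hmul k)
    · obtain ⟨k, rfl⟩ : ∃ k, n = (3 * a + 2) + 3 * k := by
        rcases hn with hd | hge
        · omega
        · exact ⟨(n - (3 * a + 2)) / 3, by omega⟩
      exact AddSubmonoid.add_mem _ h2 (hmul k)

lemma memZ_iff (a : ℕ) (z : ℤ) :
    memZ (Hn a) z ↔ 0 ≤ z ∧ ((3 : ℤ) ∣ z ∨ 3 * (a : ℤ) + 1 ≤ z) := by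
  constructor
  · rintro ⟨n, hn, rfl⟩
    simp only [Hn, Set.mem_setOf_eq] at hn
    omega
  · rintro ⟨h0, h⟩
    refine ⟨z.toNat, ?_, by omega⟩
    simp only [Hn, Set.mem_setOf_eq]
    omega

lemma pf_mem1 (a : ℕ) (ha : 0 < a) : (3 * (a : ℤ) - 1) ∈ pseudoFrob (Hn a) := by
  constructor
  · rw [memZ_iff]; omega
  · intro m hm hm0
    simp only [Hn, Set.mem_setOf_eq] at hm
    rw [memZ_iff]
    omega

lemma pf_mem2 (a : ℕ) (ha : 0 < a) : (3 * (a : ℤ) - 2) ∈ pseudoFrob (Hn a) := by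
  constructor
  · rw [memZ_iff]; omega
  · intro m hm hm0
    simp only [Hn, Set.mem_setOf_eq] at hm
    rw [memZ_iff]
    omega

lemma pf_le (a : ℕ) : ∀ f ∈ pseudoFrob (Hn a), f ≤ 3 * (a : ℤ) - 1 := by
  intro f hf
  by_contra h
  push_neg at h
  exact hf.1 ((memZ_iff a f).mpr ⟨by omega, by omega⟩)

lemma zero_mem_Hn (a : ℕ) : (0 : ℕ) ∈ Hn a := Or.inl ⟨0, rfl⟩

lemma can_lower (a : ℕ) : ∀ w ∈ canIdeal (Hn a), -(3 * (a : ℤ) - 1) ≤ w := by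
  rintro w ⟨f, hf, h, hh, rfl⟩
  have h1 := pf_le a f hf
  have h2 : (0 : ℤ) ≤ (h : ℤ) := Int.natCast_nonneg h
  omega

lemma neg_mem_can1 (a : ℕ) (ha : 0 < a) : -(3 * (a : ℤ) - 1) ∈ canIdeal (Hn a) :=
  ⟨3 * (a : ℤ) - 1, pf_mem1 a ha, 0, zero_mem_Hn a, by push_cast; ring⟩

lemma neg_mem_can2 (a : ℕ) (ha : 0 < a) : -(3 * (a : ℤ) - 2) ∈ canIdeal (Hn a) :=
  ⟨3 * (a : ℤ) - 2, pf_mem2 a ha, 0, zero_mem_Hn a, by push_cast; ring⟩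

lemma anti_iff (a : ℕ) (ha : 0 < a) (x : ℤ) :
    x ∈ antiCanIdeal (Hn a) ↔ 6 * (a : ℤ) - 1 ≤ x := by
  constructor
  · intro hx
    have h1 := hx _ (neg_mem_can1 a ha)
    have h2 := hx _ (neg_mem_can2 a ha)
    rw [memZ_iff] at h1 h2
    omega
  · intro hx w hw
    have hlb := can_lower a w hw
    rw [memZ_iff]
    omega

lemma trace_eq (a : ℕ) (ha : 0 < a) :
    trace (Hn a) = {z : ℤ | 3 * (a : ℤ) ≤ z} := by
  ext z
  constructor
  · rintro ⟨w, hw, x, hx, rfl⟩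
    have h1 := can_lower a w hw
    have h2 := (anti_iff a ha x).mp hx
    simp only [Set.mem_setOf_eq]
    omega
  · intro hz
    simp only [Set.mem_setOf_eq] at hz
    exact ⟨-(3 * (a : ℤ) - 1), neg_mem_can1 a ha, z + (3 * (a : ℤ) - 1),
      (anti_iff a ha _).mpr (by omega), by ring⟩

lemma res_Hn (a : ℕ) (ha : 0 < a) : res (Hn a) = a := by
  unfold res
  rw [trace_eq a ha]
  have hset : {h : ℕ | h ∈ Hn a ∧ (h : ℤ) ∉ {z : ℤ | 3 * (a : ℤ) ≤ z}} =
      ↑((Finset.range a).image (fun k => 3 * k)) := by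
    ext h
    simp only [Hn, Set.mem_setOf_eq, Finset.coe_image, Set.mem_image, Finset.mem_coe,
      Finset.mem_range]
    constructor
    · rintro ⟨h1, h2⟩
      have hd : 3 ∣ h := by omega
      obtain ⟨k, rfl⟩ := hd
      exact ⟨k, by omega, rfl⟩
    · rintro ⟨k, hk, rfl⟩
      refine ⟨Or.inl ⟨k, rfl⟩, by push_cast; omega⟩
  rw [hset, Set.ncard_coe_finset,
    Finset.card_image_of_injective _ (fun x y h => by omega), Finset.card_range]

end Stmt16

/-- for every positive integer `a`, the numerical semigroup
`H = ⟨3, 3a+1, 3a+2⟩` satisfies `res(H) = a`. -/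
theorem stmt_16 :
    ∀ a : ℕ, 0 < a → ∀ H : Set ℕ, H = genBy {3, 3 * a + 1, 3 * a + 2} →
      res H = a := by
  intro a ha H hH
  rw [hH, Stmt16.genBy_eq a]
  exact Stmt16.res_Hn a ha
end

section
/- Let R be a Noetherian local domain with fraction field Q, and let R̃ be an intermediate ring R ⊆ R̃ ⊆ Q that is a discrete valuation ring and is finitely generated as an R-module. Let C = {x ∈ R : x·R̃ ⊆ R} be the conductor. Then for every nonzero ideal I of R one has C ⊆ tr(I). -/
namespace TraceCond

/-- The trace ideal of an ideal `I` of `R`: the sum `Σ_φ φ(I)` over all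
`R`-linear maps `φ : I → R`. -/
noncomputable def traceIdeal {R : Type*} [CommRing R] (I : Ideal R) : Ideal R :=
  ⨆ φ : ↥I →ₗ[R] R, LinearMap.range φ

/-- The conductor `C_{R̃/R} = {x ∈ R : x·R̃ ⊆ R}` of an intermediate ring
`R ⊆ R̃ ⊆ Q`. -/
def conductorSet (R : Type*) [CommRing R] {Q : Type*} [CommRing Q] [Algebra R Q]
    (Rt : Subalgebra R Q) : Set R :=
  {x : R | ∀ y ∈ Rt, ∃ r : R, algebraMap R Q r = algebraMap R Q x * y}

end TraceCond

open TraceCond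

/-! Choose `a ∈ I` of minimal valuation in the DVR `R̃`; then `b / a ∈ R̃` for every `b ∈ I`,
so for `c` in the conductor `b ↦ c b / a` is an `R`-linear map `I → R` sending `a` to `c`. -/

theorem IsDiscreteValuationRing.exists_dvd_forall_mem {A : Type*} [CommRing A] [IsDomain A]
    [IsDiscreteValuationRing A] {s : Set A} (hs : s.Nonempty) : ∃ a ∈ s, ∀ b ∈ s, a ∣ b := by
  obtain ⟨a, ha, hmin⟩ :=
    (InvImage.wf (IsDiscreteValuationRing.addVal A) wellFounded_lt).has_min s hs
  exact ⟨a, ha, fun b hb ↦ IsDiscreteValuationRing.addVal_le_iff_dvd.mp (not_lt.mp (hmin b hb))⟩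

theorem TraceCond.mem_traceIdeal_of_dvd_mul {R : Type*} [CommRing R] [IsDomain R] {I : Ideal R}
    {a c : R} (haI : a ∈ I) (ha : a ≠ 0) (hdvd : ∀ b ∈ I, a ∣ c * b) : c ∈ traceIdeal I := by
  let e := LinearEquiv.toSpanNonzeroSingleton R R a ha
  let φ : I →ₗ[R] R := e.symm ∘ₗ (c • I.subtype).codRestrict (R ∙ a)
    fun b ↦ Ideal.mem_span_singleton.mpr (hdvd b b.2)
  have hφa : φ ⟨a, haI⟩ = c := e.symm_apply_eq.mpr rfl
  exact le_iSup (fun ψ : I →ₗ[R] R ↦ LinearMap.range ψ) φ ⟨⟨a, haI⟩, hφa⟩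

theorem TraceCond.dvd_mul_of_mem_conductorSet {R Q : Type*} [CommRing R] [CommRing Q]
    [Algebra R Q] (hinj : Function.Injective (algebraMap R Q)) {Rt : Subalgebra R Q}
    {a b c : R} (hc : c ∈ conductorSet R Rt) (hab : algebraMap R Rt a ∣ algebraMap R Rt b) :
    a ∣ c * b := by
  obtain ⟨y, hy⟩ := hab
  obtain ⟨r, hr⟩ := hc y y.2
  refine ⟨r, hinj ?_⟩
  have hb : algebraMap R Q b = algebraMap R Q a * y := congrArg Subtype.val hy
  rw [map_mul, map_mul, hr, hb]
  ring

theorem stmt_17_general (R : Type*) [CommRing R] [IsDomain R]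
    (Rt : Subalgebra R (FractionRing R)) [IsDomain ↥Rt]
    [IsDiscreteValuationRing ↥Rt]
    (I : Ideal R) (hI : I ≠ ⊥) :
    conductorSet R Rt ⊆ (traceIdeal I : Set R) := by
  intro c hc
  have hinj : Function.Injective (algebraMap R (FractionRing R)) := IsFractionRing.injective R _
  have hinjRt : Function.Injective (algebraMap R Rt) := fun x y h ↦ hinj (congrArg Subtype.val h)
  obtain ⟨_, ⟨a, haI, rfl⟩, hmin⟩ :=
    IsDiscreteValuationRing.exists_dvd_forall_mem ((Submodule.nonempty I).image (algebraMap R Rt))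
  have ha : a ≠ 0 := by
    obtain ⟨b, hbI, hb⟩ := Submodule.exists_mem_ne_zero_of_ne_bot hI
    rintro rfl
    exact hb (hinjRt (by simpa using hmin _ ⟨b, hbI, rfl⟩))
  exact mem_traceIdeal_of_dvd_mul haI ha fun b hb ↦
    dvd_mul_of_mem_conductorSet hinj hc (hmin _ ⟨b, hb, rfl⟩)

/-- if `R` is a Noetherian local domain and `R ⊆ R̃ ⊆ Q(R)` with
`R̃` a DVR which is a finite `R`-module, then the conductor `C_{R̃/R}` is
contained in the trace ideal of every nonzero ideal `I` of `R`. -/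
theorem stmt_17 (R : Type*) [CommRing R] [IsDomain R] [IsNoetherianRing R]
    [IsLocalRing R]
    (Rt : Subalgebra R (FractionRing R)) [IsDomain ↥Rt]
    [IsDiscreteValuationRing ↥Rt] [Module.Finite R ↥Rt]
    (I : Ideal R) (hI : I ≠ ⊥) :
    conductorSet R Rt ⊆ (traceIdeal I : Set R) :=
  stmt_17_general R Rt I hI
end

section
/- Let R be a Noetherian local domain with maximal ideal m and fraction field Q, and let R̃ be an intermediate ring R ⊆ R̃ ⊆ Q that is a discrete valuation ring with maximal ideal n and is finitely generated as an R-module; assume the inclusion R ⊆ R̃ induces an isomorphism of residue fields, i.e. for every u ∈ R̃ there exists h ∈ R with u − h ∈ n. Let C = {x ∈ R : x·R̃ ⊆ R} be the conductor. Then R̃ = R : C, where R : C = {x ∈ Q : x·C ⊆ R}. -/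
set_option synthInstance.maxHeartbeats 1000000
set_option maxHeartbeats 1000000

open IsLocalRing

open TraceCond

/-!
Inside `Q`, write `R` for the image of `R` and `R : M` for `1 / M`; the conductor is then
`C = R : R̃`. It is an ideal of `R̃`, nonzero because `R̃` is a finite `R`-module inside the
fraction field, hence principal, `C = c R̃`, since `R̃` is a DVR. Now if `x C ⊆ R` then
`x c R̃ = x C ⊆ R`, so `x c ∈ C = c R̃` and `x ∈ R̃`.
-/

open Submodule nonZeroDivisors

namespace Subalgebra

variable {R A : Type*} [CommRing R] [CommRing A] [Algebra R A]

def conductor (S : Subalgebra R A) : Ideal S where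
  carrier := {u | (u : A) ∈ 1 / toSubmodule S}
  zero_mem' := (1 / toSubmodule S).zero_mem
  add_mem' := (1 / toSubmodule S).add_mem
  smul_mem' w u hu v hv := by
    simpa only [smul_eq_mul, MulMemClass.coe_mul, mul_assoc, mul_left_comm] using
      hu _ (S.mul_mem w.2 hv)

variable {S : Subalgebra R A}

theorem mem_conductor_iff {u : S} : u ∈ S.conductor ↔ (u : A) ∈ 1 / toSubmodule S :=
  Iff.rfl

theorem one_div_toSubmodule_le_one : 1 / toSubmodule S ≤ 1 := fun y hy => by
  simpa only [mul_one] using hy 1 S.one_mem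

theorem one_div_toSubmodule_eq_span_mul_of_conductor_eq_span {c : S}
    (hc : S.conductor = Ideal.span {c}) :
    1 / toSubmodule S = span R {(c : A)} * toSubmodule S := by
  ext y
  rw [mem_span_singleton_mul]
  constructor
  · intro hy
    have hyS : y ∈ toSubmodule S := one_le.mpr S.one_mem (one_div_toSubmodule_le_one hy)
    obtain ⟨z, hz⟩ := Ideal.mem_span_singleton'.mp
      (hc ▸ mem_conductor_iff.mpr hy : (⟨y, hyS⟩ : S) ∈ Ideal.span {c})
    exact ⟨z, z.2, by rw [mul_comm, ← MulMemClass.coe_mul, hz]⟩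
  · rintro ⟨z, hz, rfl⟩
    exact S.conductor.mul_mem_right ⟨z, hz⟩ (hc ▸ Ideal.mem_span_singleton_self c)

theorem one_div_one_div_toSubmodule_of_eq_span_mul {c : A} (hc : c ∈ A⁰)
    (hC : 1 / toSubmodule S = span R {c} * toSubmodule S) :
    1 / (1 / toSubmodule S) = toSubmodule S := by
  refine le_antisymm (fun x hx => ?_) (le_div_iff_mul_le.mpr mul_one_div_le_one)
  have hcC : ∀ s ∈ S, c * s ∈ 1 / toSubmodule S := fun s hs =>
    hC ▸ mem_span_singleton_mul.mpr ⟨s, hs, rfl⟩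
  have hxc : x * c ∈ 1 / toSubmodule S := fun s hs => by
    simpa only [mul_assoc] using hx _ (hcC s hs)
  obtain ⟨z, hz, hxz⟩ := mem_span_singleton_mul.mp (hC ▸ hxc)
  rw [mul_comm x, mul_cancel_left_mem_nonZeroDivisors hc] at hxz
  exact hxz ▸ hz

theorem exists_algebraMap_mem_one_div_toSubmodule (M : Submonoid R) [IsLocalization M A]
    [Module.Finite R S] : ∃ b ∈ M, algebraMap R A b ∈ 1 / toSubmodule S := by
  have hfg : (toSubmodule S).FG := Module.Finite.iff_fg.mp (inferInstanceAs (Module.Finite R S))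
  obtain ⟨b, hbM, hb⟩ := FractionalIdeal.isFractional_of_fg (S := M) hfg
  refine ⟨b, hbM, fun y hy => ?_⟩
  obtain ⟨r, hr⟩ := hb y hy
  exact mem_one.mpr ⟨r, by rw [hr, Algebra.smul_def]⟩

theorem conductor_ne_bot [Nontrivial R] [IsFractionRing R A] [Module.Finite R S] :
    S.conductor ≠ ⊥ := by
  obtain ⟨b, hb, hbC⟩ := exists_algebraMap_mem_one_div_toSubmodule (S := S) R⁰
  refine fun hbot => IsFractionRing.to_map_ne_zero_of_mem_nonZeroDivisors (K := A) hb ?_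
  have hb0 : algebraMap R S b = 0 := (Ideal.mem_bot (R := S)).mp (hbot ▸ hbC)
  exact congrArg Subtype.val hb0

theorem algebraMap_mem_one_div_toSubmodule_iff {c : R} :
    algebraMap R A c ∈ 1 / toSubmodule S ↔ c ∈ conductorSet R S := by
  simp only [mem_div_iff_forall_mul_mem, mem_one, conductorSet, Set.mem_ofPred_eq,
    mem_toSubmodule]

theorem mem_one_div_one_div_toSubmodule_iff {x : A} :
    x ∈ 1 / (1 / toSubmodule S) ↔
      ∀ c ∈ conductorSet R S, ∃ r : R, algebraMap R A r = x * algebraMap R A c := by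
  refine ⟨fun hx c hc => mem_one.mp (hx _ (algebraMap_mem_one_div_toSubmodule_iff.mpr hc)),
    fun hx y hy => ?_⟩
  obtain ⟨c, rfl⟩ := mem_one.mp (one_div_toSubmodule_le_one hy)
  exact mem_one.mpr (hx c (algebraMap_mem_one_div_toSubmodule_iff.mp hy))

end Subalgebra

theorem stmt_18_general (R : Type*) [CommRing R] [IsDomain R]
    (Rt : Subalgebra R (FractionRing R))
    [IsDiscreteValuationRing ↥Rt] [Module.Finite R ↥Rt] :
    ∀ x : FractionRing R,
      x ∈ Rt ↔ ∀ c ∈ conductorSet R Rt,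
        ∃ r : R, algebraMap R (FractionRing R) r =
          x * algebraMap R (FractionRing R) c := by
  obtain ⟨ϖ, hϖ⟩ := IsDiscreteValuationRing.exists_irreducible Rt
  obtain ⟨n, hn⟩ :=
    IsDiscreteValuationRing.ideal_eq_span_pow_irreducible Subalgebra.conductor_ne_bot hϖ
  have hc : ((ϖ ^ n : Rt) : FractionRing R) ∈ (FractionRing R)⁰ :=
    mem_nonZeroDivisors_of_ne_zero <| by
      exact_mod_cast (Subtype.coe_injective.ne (pow_ne_zero n hϖ.ne_zero) :)
  intro x
  rw [← Subalgebra.mem_one_div_one_div_toSubmodule_iff,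
    Subalgebra.one_div_one_div_toSubmodule_of_eq_span_mul hc
      (Subalgebra.one_div_toSubmodule_eq_span_mul_of_conductor_eq_span hn)]
  rfl

/-- if `R` is a Noetherian local domain, `R ⊆ R̃ ⊆ Q(R)` with `R̃`
a DVR which is a finite `R`-module, and the inclusion induces an isomorphism of
residue fields, then `R̃ = R : C` where `C` is the conductor. -/
theorem stmt_18 (R : Type*) [CommRing R] [IsDomain R] [IsNoetherianRing R]
    [IsLocalRing R]
    (Rt : Subalgebra R (FractionRing R)) [IsDomain ↥Rt]
    [IsDiscreteValuationRing ↥Rt] [Module.Finite R ↥Rt]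
    (hres : ∀ u : ↥Rt, ∃ h : R,
      u - algebraMap R ↥Rt h ∈ IsLocalRing.maximalIdeal ↥Rt) :
    ∀ x : FractionRing R,
      x ∈ Rt ↔ ∀ c ∈ conductorSet R Rt,
        ∃ r : R, algebraMap R (FractionRing R) r =
          x * algebraMap R (FractionRing R) c :=
  stmt_18_general R Rt
end

section
/- Let R be a Noetherian local domain with maximal ideal m and fraction field Q, and let R̃ be an intermediate ring R ⊆ R̃ ⊆ Q that is a discrete valuation ring with maximal ideal n and is finitely generated as an R-module; assume the inclusion R ⊆ R̃ induces an isomorphism of residue fields, i.e. for every u ∈ R̃ there exists h ∈ R with u − h ∈ n. Let C = {x ∈ R : x·R̃ ⊆ R} be the conductor and let I be a nonzero ideal of R with I⁻¹ = R : I = {x ∈ Q : x·I ⊆ R}. Then the following are equivalent: (i) tr(I) = C; (ii) I⁻¹ : I⁻¹ = R̃ (as subsets of Q); (iii) I⁻¹ is isomorphic to R̃ as an R-module. -/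
/-!
Work inside `Q` with the `R`-submodules `J = I⁻¹ = 1 / I` and `T = R̃`. The trace ideal of `I`
is `J I` and the conductor is `1 / T`, so (i) says `J I = 1 / T`. Then `T J I = T (1 / T) ⊆ R`,
i.e. `T ⊆ J : J`; and `J : J ⊆ T` because `J : J` acts faithfully on the finitely generated
`R`-module `J`, hence is integral over `R`, and the DVR `T` is integrally closed. Conversely, if
`T ⊆ J : J`, the finitely generated `T`-module `I T` is `a T` for some `a` since `T` is a PID; a
conductor element `c` then has `c / a ∈ J`, so `c ∈ J I T ⊆ J I`. Finally `J : J = T` iff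
`J = q T` for some `q ≠ 0` (again because `T` is a PID), iff `J ≅ T`, since every `R`-linear map
between submodules of `Q` is a multiplication.
-/

set_option synthInstance.maxHeartbeats 1000000
set_option maxHeartbeats 1000000

open IsLocalRing

open TraceCond

/-- The fractionary ideal `I⁻¹ = R : I = {x ∈ Q(R) : x·I ⊆ R}`, as an
`R`-submodule of `Q(R)`. -/
noncomputable def invIdeal (R : Type*) [CommRing R] [IsDomain R] (I : Ideal R) :
    Submodule R (FractionRing R) where
  carrier := {x : FractionRing R | ∀ i ∈ I,
    ∃ r : R, algebraMap R (FractionRing R) r = x * algebraMap R (FractionRing R) i}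
  add_mem' := by
    intro x y hx hy i hi
    obtain ⟨r, hr⟩ := hx i hi
    obtain ⟨s, hs⟩ := hy i hi
    exact ⟨r + s, by rw [map_add, hr, hs, add_mul]⟩
  zero_mem' := by
    intro i hi
    exact ⟨0, by simp⟩
  smul_mem' := by
    intro c x hx i hi
    obtain ⟨r, hr⟩ := hx i hi
    refine ⟨c * r, ?_⟩
    rw [map_mul, hr, Algebra.smul_def]
    ring

open Submodule Pointwise nonZeroDivisors IsLocalization
open Subalgebra (toSubmodule)

section CommSemiring

variable {R A : Type*} [CommSemiring R] [CommSemiring A] [Algebra R A]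

theorem Subalgebra.toSubmodule_div_self (S : Subalgebra R A) :
    toSubmodule S / toSubmodule S = toSubmodule S := by
  refine le_antisymm (fun x hx => by simpa using hx 1 S.one_mem) ?_
  rw [Submodule.le_div_iff_mul_le, S.isIdempotentElem_toSubmodule.eq]

theorem Submodule.mul_one_div_le_one_div_of_one_div_mul_eq {P T : Submodule R A}
    (h : 1 / P * P = 1 / T) : T * (1 / P) ≤ 1 / P := by
  rw [Submodule.le_div_iff_mul_le, mul_assoc, h]
  exact mul_one_div_le_one

end CommSemiring

theorem TraceCond.conductorSet_eq_comap {R A : Type*} [CommRing R] [CommRing A] [Algebra R A]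
    (S : Subalgebra R A) :
    conductorSet R S = (1 / toSubmodule S).comap (Algebra.linearMap R A) := by
  ext x
  simp [conductorSet, mem_div_iff_forall_mul_mem, mem_one]

theorem Submodule.smul_div_smul {R K : Type*} [CommSemiring R] [Field K] [Algebra R K]
    (M N : Submodule R K) {q : K} (hq : q ≠ 0) : (q • M) / (q • N) = M / N := by
  ext x
  simp only [mem_div_iff_forall_mul_mem, mem_smul_iff_inv_mul_mem hq]
  constructor
  · intro h y hy
    simpa [hq, mul_left_comm q⁻¹] using h (q * y) (by simpa [hq])
  · intro h y hy
    simpa [mul_left_comm q⁻¹] using h _ hy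

theorem Ideal.mul_apply_eq_mul_apply {R : Type*} [CommRing R] {I : Ideal R} (φ : I →ₗ[R] R)
    (d j : I) : (d : R) * φ j = j * φ d := by
  have h : (d : R) • j = (j : R) • d := Subtype.ext (mul_comm _ _)
  simpa using congrArg φ h

section FractionField

variable {R K : Type*} [CommRing R] [Field K] [Algebra R K] [IsFractionRing R K]

theorem LinearMap.apply_mul_eq_apply_mul [Nontrivial R] {M : Submodule R K} (f : M →ₗ[R] K)
    (x y : M) : f x * y = f y * x := by
  obtain ⟨⟨a, s⟩, hx⟩ := IsLocalization.surj R⁰ (x : K)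
  obtain ⟨⟨b, t⟩, hy⟩ := IsLocalization.surj R⁰ (y : K)
  have hst : algebraMap R K (s * t : R) ≠ 0 :=
    IsFractionRing.to_map_ne_zero_of_mem_nonZeroDivisors (mul_mem s.2 t.2)
  have hxy : (s * b : R) • x = (t * a : R) • y := by
    ext
    simp only [SetLike.val_smul, Algebra.smul_def, map_mul, ← hx, ← hy]
    ring
  have hf := congrArg f hxy
  simp only [map_smul, Algebra.smul_def, map_mul, ← hx, ← hy] at hf
  refine mul_left_cancel₀ hst ?_
  rw [map_mul]
  linear_combination hf

theorem Submodule.nonempty_linearEquiv_iff_exists_eq_smul [Nontrivial R] {M N : Submodule R K}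
    (hN : N ≠ ⊥) :
    Nonempty (M ≃ₗ[R] N) ↔ ∃ q : K, q ≠ 0 ∧ M = q • N := by
  constructor
  · rintro ⟨e⟩
    obtain ⟨n₀, hn₀, hn₀0⟩ := exists_mem_ne_zero_of_ne_bot hN
    let g : N →ₗ[R] K := M.subtype ∘ₗ e.symm.toLinearMap
    have hg : ∀ n : N, g n = g ⟨n₀, hn₀⟩ / n₀ * n := fun n => by
      rw [div_mul_eq_mul_div, eq_div_iff hn₀0, ← g.apply_mul_eq_apply_mul]
    have hg₀ : g ⟨n₀, hn₀⟩ ≠ 0 := by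
      simpa [g] using hn₀0
    refine ⟨_, div_ne_zero hg₀ hn₀0, ext fun x => ⟨fun hx => ?_, fun hx => ?_⟩⟩
    · have := hg (e ⟨x, hx⟩)
      simp only [g, LinearMap.comp_apply, LinearEquiv.coe_coe, LinearEquiv.symm_apply_apply,
        Submodule.subtype_apply] at this
      rw [this]
      exact smul_mem_pointwise_smul _ _ _ (e ⟨x, hx⟩).2
    · obtain ⟨n, hn, rfl⟩ := (mem_smul_pointwise_iff_exists _ _ _).1 hx
      rw [smul_eq_mul, ← hg ⟨n, hn⟩]
      exact (e.symm ⟨n, hn⟩).2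
  · rintro ⟨q, hq, rfl⟩
    exact ⟨(N.equivMapOfInjective (DistribSMul.toLinearMap R K q)
      (mul_right_injective₀ hq)).symm⟩

theorem Submodule.exists_eq_smul_of_mul_le {S : Subalgebra R K} [IsPrincipalIdealRing S]
    {M : Submodule R K} (hM : M.FG) (hM0 : M ≠ ⊥) (hSM : toSubmodule S * M ≤ M) :
    ∃ q : K, q ≠ 0 ∧ M = q • toSubmodule S := by
  let N := span S (M : Set K)
  have hNM : ∀ x, x ∈ N ↔ x ∈ M := fun x => by
    refine ⟨fun hx => ?_, fun hx => subset_span hx⟩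
    induction hx using span_induction with
    | mem x hx => exact hx
    | zero => exact M.zero_mem
    | add x y _ _ hx hy => exact M.add_mem hx hy
    | smul a x _ hx => exact hSM (mul_mem_mul a.2 hx)
  have hNfg : N.FG := by
    obtain ⟨G, rfl⟩ := hM
    exact ⟨G, (span_span_of_tower R S _).symm⟩
  obtain ⟨q, hq⟩ :=
    (FractionalIdeal.isPrincipal ⟨N, FractionalIdeal.isFractional_of_fg hNfg⟩).principal
  have hq' : ∀ x, x ∈ M ↔ ∃ a : S, a • q = x := fun x => by
    rw [← hNM, ← mem_span_singleton]
    exact SetLike.ext_iff.1 hq x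
  refine ⟨q, ?_, ext fun x => ?_⟩
  · rintro rfl
    refine hM0 (eq_bot_iff.2 fun x hx => ?_)
    obtain ⟨a, rfl⟩ := (hq' x).1 hx
    simp
  · rw [hq', mem_smul_pointwise_iff_exists]
    exact ⟨fun ⟨a, ha⟩ => ⟨a, a.2, by rw [← ha, smul_eq_mul, mul_comm]; rfl⟩,
      fun ⟨a, ha, hx⟩ => ⟨⟨a, ha⟩, by rw [← hx, smul_eq_mul, mul_comm]; rfl⟩⟩

theorem Submodule.div_self_le_of_isIntegrallyClosed {S : Subalgebra R K} [IsIntegrallyClosed S]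
    {M : Submodule R K} (hM : M.FG) (hM0 : M ≠ ⊥) : M / M ≤ toSubmodule S := by
  intro x hx
  have hint : IsIntegral R x := isIntegral_of_smul_mem_submodule M hM0 hM x hx
  obtain ⟨y, rfl⟩ := IsIntegrallyClosed.isIntegral_iff.1 (hint.tower_top (A := S))
  exact y.2

theorem Submodule.div_self_eq_iff_exists_eq_smul (S : Subalgebra R K) [IsPrincipalIdealRing S]
    {M : Submodule R K} (hM : M.FG) (hM0 : M ≠ ⊥) :
    M / M = toSubmodule S ↔ ∃ q : K, q ≠ 0 ∧ M = q • toSubmodule S := by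
  refine ⟨fun h => exists_eq_smul_of_mul_le hM hM0 (le_div_iff_mul_le.1 h.ge), ?_⟩
  rintro ⟨q, hq, rfl⟩
  rw [smul_div_smul _ _ hq, Subalgebra.toSubmodule_div_self]

theorem Submodule.one_div_mul_eq_one_div_of_mul_le (S : Subalgebra R K) [IsPrincipalIdealRing S]
    {P : Submodule R K} (hP : P.FG) (hP0 : P ≠ ⊥) (hS : (toSubmodule S).FG)
    (hSP : toSubmodule S * (1 / P) ≤ 1 / P) : 1 / P * P = 1 / toSubmodule S := by
  have hPS : P ≤ P * toSubmodule S := by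
    simpa using _root_.mul_le_mul_right (one_le.2 S.one_mem) P
  obtain ⟨a, ha0, ha⟩ := exists_eq_smul_of_mul_le (hP.mul hS) (ne_bot_of_le_ne_bot hP0 hPS)
    (by rw [mul_left_comm, S.isIdempotentElem_toSubmodule.eq])
  have hJPS : 1 / P * (P * toSubmodule S) ≤ 1 / P * P :=
    calc 1 / P * (P * toSubmodule S) = toSubmodule S * (1 / P) * P := by ring
      _ ≤ 1 / P * P := _root_.mul_le_mul_left hSP P
  refine le_antisymm ?_ fun c hc => hJPS ?_
  · rw [le_div_iff_mul_le]
    calc 1 / P * P * toSubmodule S = 1 / P * (P * toSubmodule S) := mul_assoc _ _ _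
      _ ≤ 1 / P * P := hJPS
      _ ≤ 1 := by rw [mul_comm]; exact mul_one_div_le_one
  · have hca : a⁻¹ * c ∈ 1 / P := fun p hp => by
      have hap : a⁻¹ * p ∈ toSubmodule S :=
        (mem_smul_iff_inv_mul_mem ha0).1 (ha ▸ hPS hp)
      simpa [mul_right_comm, mul_comm c] using hc _ hap
    have haPS : a ∈ P * toSubmodule S :=
      ha ▸ (mem_smul_iff_inv_mul_mem ha0).2 (by simp [ha0])
    have := mul_mem_mul hca haPS
    rwa [mul_right_comm, inv_mul_cancel₀ ha0, one_mul] at this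

end FractionField

section Trace

variable {R K : Type*} [CommRing R] [IsDomain R] [Field K] [Algebra R K] [IsFractionRing R K]

theorem TraceCond.coeSubmodule_traceIdeal {I : Ideal R} (hI : I ≠ ⊥) :
    coeSubmodule K (traceIdeal I) = 1 / coeSubmodule K I * coeSubmodule K I := by
  refine le_antisymm ?_ (mul_le.2 ?_)
  · rw [coeSubmodule, traceIdeal, Submodule.map_iSup]
    refine iSup_le fun φ => ?_
    rintro _ ⟨_, ⟨j, rfl⟩, rfl⟩
    obtain ⟨d, hd, hd0⟩ := exists_mem_ne_zero_of_ne_bot hI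
    have hd0' : algebraMap R K d ≠ 0 := IsFractionRing.to_map_ne_zero_of_mem_nonZeroDivisors
      (mem_nonZeroDivisors_of_ne_zero hd0)
    have hq : ∀ i : I, algebraMap R K (φ ⟨d, hd⟩) / algebraMap R K d * algebraMap R K i
        = algebraMap R K (φ i) := fun i => by
      rw [div_mul_eq_mul_div, div_eq_iff hd0', ← map_mul, ← map_mul, mul_comm (φ _),
        ← Ideal.mul_apply_eq_mul_apply φ ⟨d, hd⟩ i, mul_comm]
    rw [Algebra.linearMap_apply, ← hq j]
    refine mul_mem_mul (fun y hy => ?_) (mem_map_of_mem j.2)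
    obtain ⟨i, hi, rfl⟩ := (mem_coeSubmodule _ _).1 hy
    exact mem_one.2 ⟨_, (hq ⟨i, hi⟩).symm⟩
  · intro q hq _ hi'
    obtain ⟨i, hi, rfl⟩ := (mem_coeSubmodule _ _).1 hi'
    have hqI : ∀ j : I, q * algebraMap R K j ∈ LinearMap.range (Algebra.linearMap R K) :=
      fun j => by rw [← one_eq_range]; exact hq _ (mem_map_of_mem j.2)
    let ι := LinearEquiv.ofInjective (Algebra.linearMap R K) (IsFractionRing.injective R K)
    let φ : I →ₗ[R] R := ι.symm.toLinearMap ∘ₗ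
      (LinearMap.mulLeft R q ∘ₗ Algebra.linearMap R K ∘ₗ I.subtype).codRestrict _ hqI
    have hφ : algebraMap R K (φ ⟨i, hi⟩) = q * algebraMap R K i :=
      congrArg Subtype.val (ι.apply_symm_apply _)
    rw [← hφ]
    exact mem_map_of_mem (le_iSup (fun ψ : I →ₗ[R] R => LinearMap.range ψ) φ ⟨_, rfl⟩)

theorem TraceCond.traceIdeal_eq_conductorSet_iff (S : Subalgebra R K) {I : Ideal R}
    (hI : I ≠ ⊥) : (traceIdeal I : Set R) = conductorSet R S ↔
      1 / coeSubmodule K I * coeSubmodule K I = 1 / toSubmodule S := by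
  have hC : coeSubmodule K ((1 / toSubmodule S).comap (Algebra.linearMap R K)) =
      1 / toSubmodule S := by
    rw [coeSubmodule, map_comap_eq, ← one_eq_range, inf_eq_right]
    exact fun x hx => by simpa using hx 1 S.one_mem
  rw [conductorSet_eq_comap, SetLike.coe_set_eq,
    ← (IsFractionRing.coeSubmodule_injective R K).eq_iff, coeSubmodule_traceIdeal hI, hC]

theorem one_div_coeSubmodule_fg [IsNoetherianRing R] {I : Ideal R} (hI : I ≠ ⊥) :
    (1 / coeSubmodule K I).FG := by
  have hI' : (I : FractionalIdeal R⁰ K) ≠ 0 := FractionalIdeal.coeIdeal_ne_zero.2 hI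
  have := FractionalIdeal.fg_of_isNoetherianRing le_rfl (1 / (I : FractionalIdeal R⁰ K))
  rwa [FractionalIdeal.coe_div hI', FractionalIdeal.coe_one, FractionalIdeal.coe_coeIdeal] at this

theorem one_div_coeSubmodule_mul_eq_iff [IsNoetherianRing R] (S : Subalgebra R K)
    [IsDiscreteValuationRing S] [Module.Finite R S] {I : Ideal R} (hI : I ≠ ⊥) :
    1 / coeSubmodule K I * coeSubmodule K I = 1 / toSubmodule S ↔
      1 / coeSubmodule K I / (1 / coeSubmodule K I) = toSubmodule S := by
  have hP0 : coeSubmodule K I ≠ ⊥ := by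
    simpa using (IsFractionRing.coeSubmodule_injective R K).ne hI
  have hP1 : coeSubmodule K I ≤ 1 := LinearMap.map_le_range.trans_eq one_eq_range.symm
  have hJ0 : 1 / coeSubmodule K I ≠ ⊥ :=
    (Submodule.ne_bot_iff _).2 ⟨1, one_mem_div.2 hP1, one_ne_zero⟩
  constructor
  · intro h
    exact le_antisymm (div_self_le_of_isIntegrallyClosed (one_div_coeSubmodule_fg hI) hJ0)
      (le_div_iff_mul_le.2 (mul_one_div_le_one_div_of_one_div_mul_eq h))
  · intro h
    exact one_div_mul_eq_one_div_of_mul_le S ((IsNoetherian.noetherian I).map _) hP0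
      (Module.Finite.iff_fg.1 inferInstance) (le_div_iff_mul_le.1 h.ge)

end Trace

theorem invIdeal_eq_one_div {R : Type*} [CommRing R] [IsDomain R] (I : Ideal R) :
    invIdeal R I = 1 / coeSubmodule (FractionRing R) I := by
  ext x
  simp [invIdeal, mem_div_iff_forall_mul_mem, mem_one]

theorem stmt_19_general (R : Type*) [CommRing R] [IsDomain R] [IsNoetherianRing R]
    (Rt : Subalgebra R (FractionRing R))
    [IsDiscreteValuationRing ↥Rt] [Module.Finite R ↥Rt]
    (I : Ideal R) (hI : I ≠ ⊥) :
    ((traceIdeal I : Set R) = conductorSet R Rt ↔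
      {x : FractionRing R | ∀ y ∈ invIdeal R I, x * y ∈ invIdeal R I} =
        (Rt : Set (FractionRing R))) ∧
    ((traceIdeal I : Set R) = conductorSet R Rt ↔
      Nonempty (↥(invIdeal R I) ≃ₗ[R] ↥Rt)) := by
  have hJ : invIdeal R I = 1 / coeSubmodule (FractionRing R) I := invIdeal_eq_one_div I
  have hJ0 : invIdeal R I ≠ ⊥ :=
    (Submodule.ne_bot_iff _).2 ⟨1, fun i _ => ⟨i, (one_mul _).symm⟩, one_ne_zero⟩
  have hRt0 : toSubmodule Rt ≠ ⊥ := (Submodule.ne_bot_iff _).2 ⟨1, Rt.one_mem, one_ne_zero⟩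
  have h12 : (traceIdeal I : Set R) = conductorSet R Rt ↔
      invIdeal R I / invIdeal R I = toSubmodule Rt := by
    rw [traceIdeal_eq_conductorSet_iff Rt hI, one_div_coeSubmodule_mul_eq_iff Rt hI, hJ]
  have h23 : invIdeal R I / invIdeal R I = toSubmodule Rt ↔
      Nonempty (invIdeal R I ≃ₗ[R] Rt) :=
    (div_self_eq_iff_exists_eq_smul Rt (hJ ▸ one_div_coeSubmodule_fg hI) hJ0).trans
      (nonempty_linearEquiv_iff_exists_eq_smul hRt0).symm
  exact ⟨h12.trans SetLike.coe_set_eq.symm, h12.trans h23⟩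

/-- for `R` a Noetherian local domain, `R ⊆ R̃ ⊆ Q(R)` with `R̃` a
DVR which is a finite `R`-module inducing an isomorphism of residue fields, and
`I` a nonzero ideal of `R`, the following are equivalent:
(i) `tr(I) = C`;  (ii) `I⁻¹ : I⁻¹ = R̃`;  (iii) `I⁻¹ ≅ R̃` as `R`-modules. -/
theorem stmt_19 (R : Type*) [CommRing R] [IsDomain R] [IsNoetherianRing R]
    [IsLocalRing R]
    (Rt : Subalgebra R (FractionRing R)) [IsDomain ↥Rt]
    [IsDiscreteValuationRing ↥Rt] [Module.Finite R ↥Rt]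
    (hres : ∀ u : ↥Rt, ∃ h : R,
      u - algebraMap R ↥Rt h ∈ IsLocalRing.maximalIdeal ↥Rt)
    (I : Ideal R) (hI : I ≠ ⊥) :
    ((traceIdeal I : Set R) = conductorSet R Rt ↔
      {x : FractionRing R | ∀ y ∈ invIdeal R I, x * y ∈ invIdeal R I} =
        (Rt : Set (FractionRing R))) ∧
    ((traceIdeal I : Set R) = conductorSet R Rt ↔
      Nonempty (↥(invIdeal R I) ≃ₗ[R] ↥Rt)) :=
  stmt_19_general R Rt I hI
end
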